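/- Let (P, Q, R) be an affinely independent triple of points of the Euclidean plane E = ℝ². The map φ : S → convexHull{P, Q, R} is surjective: for every point x in the convex hull of {P, Q, R} there exists a sequence s : ℕ → {A, B, C, M} such that x ∈ T_n(s) for every n, i.e. φ(s) = x. -/
import Mathlib


noncomputable section

/-- The Euclidean plane. -/
abbrev E := EuclideanSpace ℝ (Fin 2)

/-- The four letters indexing the mid-line subdivision maps. -/
inductive Letter : Type
  | A | B | C | M
deriving DecidableEq

open Letter

/-- The four mid-line subdivision maps on ordered triples of points of the plane. -/
def g : Letter → E × E × E → E × E × E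
  | Letter.A, (P, Q, R) => (P, midpoint ℝ P Q, midpoint ℝ P R)
  | Letter.B, (P, Q, R) => (midpoint ℝ P Q, Q, midpoint ℝ Q R)
  | Letter.C, (P, Q, R) => (midpoint ℝ P R, midpoint ℝ Q R, R)
  | Letter.M, (P, Q, R) => (midpoint ℝ Q R, midpoint ℝ P R, midpoint ℝ P Q)

/-- The set of the three vertices of a triple. -/
def vertexSet (t : E × E × E) : Set E := {t.1, t.2.1, t.2.2}

/-- The iterated triples `Δₙ`, where `Δ₀ = t` and `Δ_{n+1} = g_{s n} Δₙ`. -/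
def orbit (t : E × E × E) (s : ℕ → Letter) : ℕ → E × E × E
  | 0 => t
  | n + 1 => g (s n) (orbit t s n)

/-- The nested closed triangles `Tₙ(s)`: the convex hull of the vertices of `Δₙ`. -/
def T (t : E × E × E) (s : ℕ → Letter) (n : ℕ) : Set E :=
  convexHull ℝ (vertexSet (orbit t s n))

/-- Midpoint as a combination with scalar coefficients `2⁻¹`. -/
lemma midpoint_eq_half (x y : E) : midpoint ℝ x y = (2⁻¹ : ℝ) • x + (2⁻¹ : ℝ) • y := by
  rw [midpoint_eq_smul_add, smul_add]; norm_num

/-- `x` is the convex combination of the vertices of `p.1` with weights `p.2`. -/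
def Good (x : E) (p : (E × E × E) × (ℝ × ℝ × ℝ)) : Prop :=
  0 ≤ p.2.1 ∧ 0 ≤ p.2.2.1 ∧ 0 ≤ p.2.2.2 ∧ p.2.1 + p.2.2.1 + p.2.2.2 = 1 ∧
    x = p.2.1 • p.1.1 + p.2.2.1 • p.1.2.1 + p.2.2.2 • p.1.2.2

lemma good_mem {x : E} {p : (E × E × E) × (ℝ × ℝ × ℝ)} (h : Good x p) :
    x ∈ convexHull ℝ (vertexSet p.1) := by
  obtain ⟨ha, hb, hc, hsum, hx⟩ := h
  have h1 : ∑ i, (![p.2.1, p.2.2.1, p.2.2.2]) i = 1 := by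
    simpa [Fin.sum_univ_three] using hsum
  have key : x = Finset.univ.centerMass ![p.2.1, p.2.2.1, p.2.2.2] ![p.1.1, p.1.2.1, p.1.2.2] := by
    rw [Finset.centerMass_eq_of_sum_1 _ _ h1, Fin.sum_univ_three]
    simpa using hx
  rw [key]
  exact Finset.centerMass_mem_convexHull _
    (fun i _ => by fin_cases i <;> simpa)
    (by rw [h1]; norm_num)
    (fun i _ => by fin_cases i <;> simp [vertexSet])

lemma exists_good {P Q R x : E} (hx : x ∈ convexHull ℝ ({P, Q, R} : Set E)) :
    ∃ w, Good x ((P, Q, R), w) := by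
  rw [show ({P, Q, R} : Set E) = insert P {Q, R} from rfl,
    convexHull_insert ⟨Q, by simp⟩, convexHull_pair] at hx
  obtain ⟨y, hy, hxy⟩ := Set.mem_iUnion₂.mp hx
  obtain ⟨z, hz, hxz⟩ := Set.mem_iUnion₂.mp hxy
  rw [segment_eq_image] at hz hxz
  obtain ⟨u, hu, rfl⟩ := hz
  obtain ⟨v, hv, hveq⟩ := hxz
  rw [show y = P from hy] at hveq
  refine ⟨(1 - v, v * (1 - u), v * u),
    show (0:ℝ) ≤ 1 - v by linarith [hv.2],
    show (0:ℝ) ≤ v * (1 - u) by nlinarith [hv.1, hu.2],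
    show (0:ℝ) ≤ v * u by nlinarith [hv.1, hu.1],
    show 1 - v + v * (1 - u) + v * u = 1 by ring, ?_⟩
  show x = (1 - v) • P + (v * (1 - u)) • Q + (v * u) • R
  rw [← hveq]; module

lemma good_step {x : E} {p : (E × E × E) × (ℝ × ℝ × ℝ)} (h : Good x p) :
    ∃ ℓ w', Good x (g ℓ p.1, w') := by
  obtain ⟨⟨P, Q, R⟩, a, b, c⟩ := p
  obtain ⟨ha, hb, hc, hsum, hx⟩ := h
  simp only at ha hb hc hsum hx
  by_cases hA : (1 : ℝ) / 2 ≤ a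
  · refine ⟨Letter.A, (2 * a - 1, 2 * b, 2 * c),
      show (0:ℝ) ≤ 2 * a - 1 by linarith, show (0:ℝ) ≤ 2 * b by linarith,
      show (0:ℝ) ≤ 2 * c by linarith, show 2 * a - 1 + 2 * b + 2 * c = 1 by linarith, ?_⟩
    show x = (2 * a - 1) • P + (2 * b) • midpoint ℝ P Q + (2 * c) • midpoint ℝ P R
    rw [hx, midpoint_eq_half, midpoint_eq_half]; match_scalars <;> linarith
  by_cases hB : (1 : ℝ) / 2 ≤ b
  · refine ⟨Letter.B, (2 * a, 2 * b - 1, 2 * c),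
      show (0:ℝ) ≤ 2 * a by linarith, show (0:ℝ) ≤ 2 * b - 1 by linarith,
      show (0:ℝ) ≤ 2 * c by linarith, show 2 * a + (2 * b - 1) + 2 * c = 1 by linarith, ?_⟩
    show x = (2 * a) • midpoint ℝ P Q + (2 * b - 1) • Q + (2 * c) • midpoint ℝ Q R
    rw [hx, midpoint_eq_half, midpoint_eq_half]; match_scalars <;> linarith
  by_cases hC : (1 : ℝ) / 2 ≤ c
  · refine ⟨Letter.C, (2 * a, 2 * b, 2 * c - 1),
      show (0:ℝ) ≤ 2 * a by linarith, show (0:ℝ) ≤ 2 * b by linarith,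
      show (0:ℝ) ≤ 2 * c - 1 by linarith, show 2 * a + 2 * b + (2 * c - 1) = 1 by linarith, ?_⟩
    show x = (2 * a) • midpoint ℝ P R + (2 * b) • midpoint ℝ Q R + (2 * c - 1) • R
    rw [hx, midpoint_eq_half, midpoint_eq_half]; match_scalars <;> linarith
  · refine ⟨Letter.M, (1 - 2 * a, 1 - 2 * b, 1 - 2 * c),
      show (0:ℝ) ≤ 1 - 2 * a by linarith, show (0:ℝ) ≤ 1 - 2 * b by linarith,
      show (0:ℝ) ≤ 1 - 2 * c by linarith,
      show 1 - 2 * a + (1 - 2 * b) + (1 - 2 * c) = 1 by linarith, ?_⟩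
    show x = (1 - 2 * a) • midpoint ℝ Q R + (1 - 2 * b) • midpoint ℝ P R
      + (1 - 2 * c) • midpoint ℝ P Q
    rw [hx, midpoint_eq_half, midpoint_eq_half, midpoint_eq_half]; match_scalars <;> linarith

/-- States carrying a triple together with valid weights expressing `x`. -/
def St (x : E) := { p : (E × E × E) × (ℝ × ℝ × ℝ) // Good x p }

/-- One step of the greedy subdivision: a letter and the next state. -/
noncomputable def nxt (x : E) (q : St x) : Letter × St x :=
  ⟨(good_step q.2).choose,
    ⟨(g (good_step q.2).choose q.1.1, (good_step q.2).choose_spec.choose),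
      (good_step q.2).choose_spec.choose_spec⟩⟩

/-- The sequence of states produced by the greedy subdivision. -/
noncomputable def Dseq (x : E) (q0 : St x) : ℕ → St x
  | 0 => q0
  | n + 1 => (nxt x (Dseq x q0 n)).2

/-- Surjectivity of the address map `φ`: every point of the closed triangle
`convexHull {P, Q, R}` lies in `Tₙ(s)` for all `n`, for some sequence `s`. -/
theorem address_map_surjective (P Q R : E)
    (hind : AffineIndependent ℝ ![P, Q, R]) (x : E)
    (hx : x ∈ convexHull ℝ ({P, Q, R} : Set E)) :
    ∃ s : ℕ → Letter, ∀ n : ℕ, x ∈ T (P, Q, R) s n := by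
  obtain ⟨w0, hw0⟩ := exists_good hx
  set q0 : St x := ⟨((P, Q, R), w0), hw0⟩ with hq0
  refine ⟨fun n => (nxt x (Dseq x q0 n)).1, fun n => ?_⟩
  have key : ∀ n, orbit (P, Q, R) (fun n => (nxt x (Dseq x q0 n)).1) n
      = (Dseq x q0 n).1.1 := by
    intro n
    induction n with
    | zero => rfl
    | succ k ih =>
      show g ((nxt x (Dseq x q0 k)).1) (orbit (P, Q, R) _ k) = _
      rw [ih]
      rfl
  rw [T, key]
  exact good_mem (Dseq x q0 n).2
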